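/- For every p ∈ [1,∞) and α > 0 there exists a constant c_{p,α} ∈ (0,∞) such that for every probability space (Ω,μ), every normed space (E,‖·‖_E) and every bounded measurable function f : Ω → E that is not almost everywhere zero, ‖f‖_{L_p(log L)^α(E)} ≥ c_{p,α} ‖f‖_{L_p(E)} (1 + log^{α/p}(‖f‖_{L_p(E)} / ‖f‖_{L_1(E)})). -/

import Mathlib

/-!
If `γ` is admissible for the Orlicz norm, then `t ^ p ≤ ψ t` gives `‖f‖_p ≤ γ`; for `p = 1` this
is all, since then `‖f‖_p = ‖f‖_1`. For `p > 1` choose the level `a` with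
`a ^ (p - 1) ‖f‖_1 = ‖f‖_p ^ p / 2`. As `‖f‖ ^ p ≤ a ^ (p - 1) ‖f‖` on `{‖f‖ ≤ a}`, at least half
of `∫ ‖f‖ ^ p` lives on `{a < ‖f‖}`, where `ψ (‖f‖ / γ) ≥ (‖f‖ / γ) ^ p log ^ α (e + (a / γ) ^ p)`;
hence `log ^ α (e + (a / γ) ^ p) ≤ 2 (γ / ‖f‖_p) ^ p`. With `R = ‖f‖_p / ‖f‖_1` the level is
`a = ‖f‖_p (R / 2) ^ (1 / (p - 1))`, so unless `γ ≥ ‖f‖_p log ^ (α / p) R` already, the logarithm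
is of order `log R`, which again forces `γ ≳ ‖f‖_p log ^ (α / p) R`.
-/

noncomputable section

open Finset MeasureTheory

universe u v

def psi (p α t : ℝ) : ℝ := t ^ p * Real.log (Real.exp 1 + t ^ p) ^ α

/-- The Orlicz norm `‖f‖_{L_p(log L)^α(E)}` with respect to a measure `μ`. -/
def orliczMeas {Ω : Type*} [MeasurableSpace Ω] (μ : Measure Ω)
    {E : Type*} [NormedAddCommGroup E] (p α : ℝ) (f : Ω → E) : ℝ :=
  sInf {γ : ℝ | 0 < γ ∧ ∫ x, psi p α (‖f x‖ / γ) ∂μ ≤ 1}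

open Real Filter

section Psi

variable {p α : ℝ}

lemma one_le_log_exp_one_add {x : ℝ} (hx : 0 ≤ x) : 1 ≤ log (exp 1 + x) := by
  rw [le_log_iff_exp_le (by positivity)]
  linarith

lemma log_exp_one_add_rpow_nonneg (p α : ℝ) {x : ℝ} (hx : 0 ≤ x) :
    0 ≤ log (exp 1 + x ^ p) ^ α :=
  rpow_nonneg (zero_le_one.trans (one_le_log_exp_one_add (rpow_nonneg hx p))) α

lemma psi_nonneg (p α : ℝ) {t : ℝ} (ht : 0 ≤ t) : 0 ≤ psi p α t :=
  mul_nonneg (rpow_nonneg ht p) (log_exp_one_add_rpow_nonneg p α ht)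

lemma measurable_psi (p α : ℝ) : Measurable (psi p α) := by
  unfold psi
  fun_prop

lemma rpow_mul_log_le_psi (hp : 0 ≤ p) (hα : 0 ≤ α) {a t : ℝ} (ha : 0 ≤ a) (hat : a ≤ t) :
    t ^ p * log (exp 1 + a ^ p) ^ α ≤ psi p α t := by
  have := one_le_log_exp_one_add (rpow_nonneg ha p)
  have := ha.trans hat
  unfold psi
  gcongr

lemma psi_le_psi (hp : 0 ≤ p) (hα : 0 ≤ α) {s t : ℝ} (hs : 0 ≤ s) (hst : s ≤ t) :
    psi p α s ≤ psi p α t :=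
  calc psi p α s ≤ t ^ p * log (exp 1 + s ^ p) ^ α := by
        unfold psi
        gcongr
        exact log_exp_one_add_rpow_nonneg p α hs
    _ ≤ psi p α t := rpow_mul_log_le_psi hp hα hs hst

lemma rpow_le_psi (hα : 0 ≤ α) {t : ℝ} (ht : 0 ≤ t) : t ^ p ≤ psi p α t :=
  le_mul_of_one_le_right (rpow_nonneg ht p)
    (one_le_rpow (one_le_log_exp_one_add (rpow_nonneg ht p)) hα)

lemma exists_pos_psi_le_one (hp : p ≠ 0) (hα : 0 ≤ α) : ∃ t, 0 < t ∧ psi p α t ≤ 1 := by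
  refine ⟨exp (-α / p), exp_pos _, ?_⟩
  have hpow : exp (-α / p) ^ p = exp (-α) := by rw [← exp_mul, div_mul_cancel₀ _ hp]
  have hlog : log (exp 1 + exp (-α)) ≤ exp 1 := by
    have := log_le_sub_one_of_pos (x := exp 1 + exp (-α)) (by positivity)
    have : exp (-α) ≤ 1 := exp_le_one_iff.2 (by linarith)
    linarith
  calc psi p α (exp (-α / p)) ≤ exp (-α) * exp 1 ^ α := by
        unfold psi
        rw [hpow]
        gcongr
        exact zero_le_one.trans (one_le_log_exp_one_add (exp_pos _).le)
    _ = 1 := by rw [exp_one_rpow, ← exp_add, neg_add_cancel, exp_zero]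

end Psi

section Orlicz

variable {Ω : Type*} [MeasurableSpace Ω] {μ : Measure Ω} {p α : ℝ}

lemma integral_le_integral_rpow_rpow_one_div [IsProbabilityMeasure μ] {g : Ω → ℝ} (hg : 0 ≤ g)
    (hp : 1 ≤ p) (hgi : Integrable g μ) (hgpi : Integrable (fun x => g x ^ p) μ) :
    ∫ x, g x ∂μ ≤ (∫ x, g x ^ p ∂μ) ^ (1 / p) := by
  have jensen : (∫ x, g x ∂μ) ^ p ≤ ∫ x, g x ^ p ∂μ :=
    (convexOn_rpow hp).map_integral_le (continuous_rpow_const (by linarith)).continuousOn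
      isClosed_Ici (ae_of_all _ hg) hgi hgpi
  rw [one_div, le_rpow_inv_iff_of_pos (integral_nonneg hg)
    (integral_nonneg fun x => rpow_nonneg (hg x) p) (by linarith)]
  exact jensen

lemma setIntegral_rpow_le_mul_integral {g : Ω → ℝ} (hg : Measurable g) (hg0 : 0 ≤ g)
    (hgi : Integrable g μ) (hp : 1 ≤ p) {a : ℝ} (ha : 0 ≤ a) :
    ∫ x in {x | g x ≤ a}, g x ^ p ∂μ ≤ a ^ (p - 1) * ∫ x, g x ∂μ := by
  have hA : MeasurableSet {x | g x ≤ a} := measurableSet_le hg measurable_const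
  calc ∫ x in {x | g x ≤ a}, g x ^ p ∂μ ≤ ∫ x in {x | g x ≤ a}, a ^ (p - 1) * g x ∂μ := by
        refine integral_mono_of_nonneg (ae_of_all _ fun x => rpow_nonneg (hg0 x) p)
          (hgi.const_mul _).integrableOn (ae_restrict_of_forall_mem hA fun x (hx : g x ≤ a) => ?_)
        have := hg0 x
        calc g x ^ p = g x ^ (p - 1) * g x := by
              rw [← rpow_add_one' (hg0 x) (by linarith), sub_add_cancel]
          _ ≤ a ^ (p - 1) * g x := by gcongr
    _ = a ^ (p - 1) * ∫ x in {x | g x ≤ a}, g x ∂μ := integral_const_mul _ _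
    _ ≤ a ^ (p - 1) * ∫ x, g x ∂μ :=
        mul_le_mul_of_nonneg_left (setIntegral_le_integral hgi (ae_of_all _ hg0)) (by positivity)

variable {E : Type*} [NormedAddCommGroup E] {f : Ω → E}

lemma integral_norm_pos (hf : Integrable f μ) (hf0 : ¬ f =ᵐ[μ] 0) : 0 < ∫ x, ‖f x‖ ∂μ := by
  refine (integral_nonneg fun x => norm_nonneg (f x)).lt_of_ne' fun h => hf0 ?_
  filter_upwards [(integral_eq_zero_iff_of_nonneg (fun x => norm_nonneg (f x)) hf.norm).1 h]
    with x hx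
  simpa using hx

lemma integrable_norm_rpow_of_bound [IsFiniteMeasure μ] (hp : 0 ≤ p) (hf : StronglyMeasurable f)
    {M : ℝ} (hM : ∀ x, ‖f x‖ ≤ M) : Integrable (fun x => ‖f x‖ ^ p) μ :=
  Integrable.of_bound (hf.norm.measurable.pow_const p).aestronglyMeasurable (M ^ p)
    (ae_of_all _ fun x => by
      rw [norm_of_nonneg (by positivity)]
      exact rpow_le_rpow (norm_nonneg _) (hM x) hp)

lemma integrable_psi_norm_div_of_bound [IsFiniteMeasure μ] (hp : 0 ≤ p) (hα : 0 ≤ α)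
    (hf : StronglyMeasurable f) {M : ℝ} (hM : ∀ x, ‖f x‖ ≤ M) {γ : ℝ} (hγ : 0 < γ) :
    Integrable (fun x => psi p α (‖f x‖ / γ)) μ :=
  Integrable.of_bound
    ((measurable_psi p α).comp (hf.norm.measurable.div_const γ)).aestronglyMeasurable
    (psi p α (M / γ)) (ae_of_all _ fun x => by
      rw [norm_of_nonneg (psi_nonneg p α (by positivity))]
      exact psi_le_psi hp hα (by positivity) (by gcongr; exact hM x))

lemma integral_norm_rpow_le_mul_integral_psi (hα : 0 ≤ α) {γ : ℝ} (hγ : 0 < γ)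
    (hψ : Integrable (fun x => psi p α (‖f x‖ / γ)) μ) :
    ∫ x, ‖f x‖ ^ p ∂μ ≤ γ ^ p * ∫ x, psi p α (‖f x‖ / γ) ∂μ := by
  have h : ∀ x, ‖f x‖ ^ p = γ ^ p * (‖f x‖ / γ) ^ p := fun x => by
    rw [div_rpow (norm_nonneg _) hγ.le, mul_div_cancel₀ _ (by positivity)]
  simp_rw [h, integral_const_mul]
  exact mul_le_mul_of_nonneg_left (integral_mono_of_nonneg (ae_of_all _ fun x => by positivity) hψ
    (ae_of_all _ fun x => rpow_le_psi hα (by positivity))) (by positivity)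

lemma integral_norm_rpow_rpow_one_div_le (hp : 0 < p) (hα : 0 ≤ α) {γ : ℝ} (hγ : 0 < γ)
    (hψi : Integrable (fun x => psi p α (‖f x‖ / γ)) μ) (hψ : ∫ x, psi p α (‖f x‖ / γ) ∂μ ≤ 1) :
    (∫ x, ‖f x‖ ^ p ∂μ) ^ (1 / p) ≤ γ := by
  rw [one_div, rpow_inv_le_iff_of_pos (integral_nonneg fun x => by positivity) hγ.le hp]
  calc ∫ x, ‖f x‖ ^ p ∂μ ≤ γ ^ p * ∫ x, psi p α (‖f x‖ / γ) ∂μ :=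
        integral_norm_rpow_le_mul_integral_psi hα hγ hψi
    _ ≤ γ ^ p := mul_le_of_le_one_right (by positivity) hψ

lemma log_rpow_mul_setIntegral_le_mul_integral_psi (hp : 0 ≤ p) (hα : 0 ≤ α)
    (hf : StronglyMeasurable f) {a γ : ℝ} (ha : 0 ≤ a) (hγ : 0 < γ)
    (hψ : Integrable (fun x => psi p α (‖f x‖ / γ)) μ) :
    log (exp 1 + (a / γ) ^ p) ^ α * ∫ x in {x | a < ‖f x‖}, ‖f x‖ ^ p ∂μ ≤
      γ ^ p * ∫ x, psi p α (‖f x‖ / γ) ∂μ := by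
  set K := log (exp 1 + (a / γ) ^ p) ^ α
  have hK : 0 ≤ K := log_exp_one_add_rpow_nonneg p α (by positivity)
  have hA : MeasurableSet {x | a < ‖f x‖} := measurableSet_lt measurable_const hf.norm.measurable
  have h : ∀ x, K * ‖f x‖ ^ p = γ ^ p * ((‖f x‖ / γ) ^ p * K) := fun x => by
    rw [div_rpow (norm_nonneg _) hγ.le]
    field_simp
  rw [← integral_const_mul]
  simp_rw [h, integral_const_mul]
  refine mul_le_mul_of_nonneg_left ?_ (by positivity)
  calc ∫ x in {x | a < ‖f x‖}, (‖f x‖ / γ) ^ p * K ∂μ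
      ≤ ∫ x in {x | a < ‖f x‖}, psi p α (‖f x‖ / γ) ∂μ :=
        integral_mono_of_nonneg (ae_of_all _ fun x => by positivity) hψ.integrableOn
          (ae_restrict_of_forall_mem hA fun x (hx : a < ‖f x‖) =>
            rpow_mul_log_le_psi hp hα (by positivity) (by gcongr))
    _ ≤ ∫ x, psi p α (‖f x‖ / γ) ∂μ :=
        setIntegral_le_integral hψ (ae_of_all _ fun x => psi_nonneg p α (by positivity))

lemma log_rpow_mul_sub_le_of_integral_psi_le_one (hp : 1 ≤ p) (hα : 0 ≤ α)
    (hf : StronglyMeasurable f) (hf1 : Integrable (fun x => ‖f x‖) μ)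
    (hfp : Integrable (fun x => ‖f x‖ ^ p) μ) {a γ : ℝ} (ha : 0 ≤ a) (hγ : 0 < γ)
    (hψi : Integrable (fun x => psi p α (‖f x‖ / γ)) μ) (hψ : ∫ x, psi p α (‖f x‖ / γ) ∂μ ≤ 1) :
    log (exp 1 + (a / γ) ^ p) ^ α * (∫ x, ‖f x‖ ^ p ∂μ - a ^ (p - 1) * ∫ x, ‖f x‖ ∂μ) ≤
      γ ^ p := by
  have hA : MeasurableSet {x | a < ‖f x‖} := measurableSet_lt measurable_const hf.norm.measurable
  have hsplit := integral_add_compl hA hfp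
  have hlow : ∫ x in {x | a < ‖f x‖}ᶜ, ‖f x‖ ^ p ∂μ ≤ a ^ (p - 1) * ∫ x, ‖f x‖ ∂μ := by
    simpa only [Set.compl_ofPred, not_lt] using
      setIntegral_rpow_le_mul_integral hf.norm.measurable (fun x => norm_nonneg (f x)) hf1 hp ha
  calc log (exp 1 + (a / γ) ^ p) ^ α * (∫ x, ‖f x‖ ^ p ∂μ - a ^ (p - 1) * ∫ x, ‖f x‖ ∂μ)
      ≤ log (exp 1 + (a / γ) ^ p) ^ α * ∫ x in {x | a < ‖f x‖}, ‖f x‖ ^ p ∂μ := by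
        gcongr
        · exact log_exp_one_add_rpow_nonneg p α (by positivity)
        · linarith
    _ ≤ γ ^ p * ∫ x, psi p α (‖f x‖ / γ) ∂μ :=
        log_rpow_mul_setIntegral_le_mul_integral_psi (by linarith) hα hf ha hγ hψi
    _ ≤ γ ^ p := mul_le_of_le_one_right (by positivity) hψ

lemma le_orliczMeas [IsProbabilityMeasure μ] (hp : 0 < p) (hα : 0 ≤ α) {M : ℝ}
    (hM : ∀ x, ‖f x‖ ≤ M) {b : ℝ}
    (h : ∀ γ, 0 < γ → ∫ x, psi p α (‖f x‖ / γ) ∂μ ≤ 1 → b ≤ γ) : b ≤ orliczMeas μ p α f := by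
  obtain ⟨t, ht, hψt⟩ := exists_pos_psi_le_one hp.ne' hα
  have hM1 : 0 < max M 1 := lt_max_of_lt_right one_pos
  have hbound : ∀ x, ‖f x‖ / (max M 1 / t) ≤ t := fun x => by
    rw [div_div_eq_mul_div, div_le_iff₀ hM1, mul_comm t]
    exact mul_le_mul_of_nonneg_right ((hM x).trans (le_max_left M 1)) ht.le
  have hψ : ∫ x, psi p α (‖f x‖ / (max M 1 / t)) ∂μ ≤ 1 :=
    calc ∫ x, psi p α (‖f x‖ / (max M 1 / t)) ∂μ ≤ ∫ _, (1 : ℝ) ∂μ :=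
          integral_mono_of_nonneg (ae_of_all _ fun x => psi_nonneg p α (by positivity))
            (integrable_const 1)
            (ae_of_all _ fun x => (psi_le_psi hp.le hα (by positivity) (hbound x)).trans hψt)
      _ = 1 := by simp
  exact le_csInf ⟨_, by positivity, hψ⟩ fun γ ⟨hγ, hψγ⟩ => h γ hγ hψγ

end Orlicz

section Scalar

variable {p α : ℝ}

lemma eventually_mul_log_add_le_mul (a C : ℝ) {b : ℝ} (hb : 0 < b) :
    ∀ᶠ s in atTop, a * log s + C ≤ b * s := by
  filter_upwards [((isLittleO_log_id_atTop.const_mul_left a).add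
    (Asymptotics.isLittleO_const_id_atTop C)).bound hb, eventually_ge_atTop 0] with s hs hs0
  rw [id, norm_of_nonneg hs0] at hs
  exact (le_abs_self _).trans hs

lemma rpow_mul_le_of_log_rpow_le (hp : 1 < p) (hα : 0 < α) {s t : ℝ} (hs : 0 < s) (ht : 0 < t)
    (hts : t < s ^ (α / p)) (hgrowth : α * log s + p / (p - 1) * log 2 ≤ p / (2 * (p - 1)) * s)
    (h : log (exp 1 + (exp ((s - log 2) / (p - 1)) / t) ^ p) ^ α ≤ 2 * t ^ p) :
    (p / (2 * (p - 1)) * s) ^ α ≤ 2 * t ^ p := by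
  refine le_trans (rpow_le_rpow (by positivity) ?_ hα.le) h
  set x := exp ((s - log 2) / (p - 1)) / t
  have hx : 0 < x := by positivity
  have hlogt : p * log t < α * log s := by
    have := log_lt_log ht hts
    rw [log_rpow hs] at this
    have hp0 : 0 < p := by linarith
    calc p * log t < p * (α / p * log s) := mul_lt_mul_of_pos_left this hp0
      _ = α * log s := by field_simp
  have hlogx : p * log x = p / (p - 1) * s - p / (p - 1) * log 2 - p * log t := by
    rw [log_div (exp_pos _).ne' ht.ne', log_exp]
    ring
  have hhalf : p / (p - 1) * s = 2 * (p / (2 * (p - 1)) * s) := by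
    field_simp
  calc p / (2 * (p - 1)) * s ≤ p * log x := by linarith
    _ = log (x ^ p) := (log_rpow hx p).symm
    _ ≤ log (exp 1 + x ^ p) := log_le_log (by positivity) (by linarith [exp_pos 1])

lemma exists_pos_mul_log_rpow_le (hp : 1 < p) (hα : 0 < α) :
    ∃ κ, 0 < κ ∧ ∀ R t : ℝ, 1 ≤ R → 1 ≤ t →
      (∀ a, 0 ≤ a → log (exp 1 + (a / t) ^ p) ^ α * (1 - a ^ (p - 1) / R) ≤ t ^ p) →
      κ * log R ^ (α / p) ≤ t := by
  have hp0 : 0 < p := by linarith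
  set b := p / (2 * (p - 1))
  obtain ⟨s0, hs0⟩ := ((eventually_mul_log_add_le_mul α (p / (p - 1) * log 2)
    (b := b) (by positivity)).and (eventually_ge_atTop 1)).exists_forall_of_atTop
  have hs01 : 1 ≤ s0 := (hs0 s0 le_rfl).2
  set κ := (b ^ α / 2) ^ (1 / p) with hκ_def
  refine ⟨min (min 1 (s0 ^ (α / p))⁻¹) κ, by positivity, fun R t hR ht h => ?_⟩
  set s := log R
  have hs : 0 ≤ s := log_nonneg hR
  rcases le_or_gt s s0 with hss0 | hs0s
  · calc min (min 1 (s0 ^ (α / p))⁻¹) κ * s ^ (α / p) ≤ (s0 ^ (α / p))⁻¹ * s0 ^ (α / p) := by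
          gcongr
          exact (min_le_left _ _).trans (min_le_right _ _)
      _ = 1 := inv_mul_cancel₀ (by positivity)
      _ ≤ t := ht
  rcases le_or_gt (s ^ (α / p)) t with hst | hts
  · calc min (min 1 (s0 ^ (α / p))⁻¹) κ * s ^ (α / p) ≤ 1 * s ^ (α / p) := by
          gcongr
          exact (min_le_left _ _).trans (min_le_left _ _)
      _ ≤ t := by rwa [one_mul]
  have hgrowth := (hs0 s hs0s.le).1
  have half : exp ((s - log 2) / (p - 1)) ^ (p - 1) / R = 1 / 2 := by
    rw [← exp_mul, div_mul_cancel₀ _ (by linarith), exp_sub, exp_log (by linarith),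
      exp_log two_pos]
    field_simp
  have key := rpow_mul_le_of_log_rpow_le hp hα (by linarith) (by linarith) hts hgrowth
    (by linarith [half ▸ h _ (exp_pos _).le])
  calc min (min 1 (s0 ^ (α / p))⁻¹) κ * s ^ (α / p) ≤ κ * s ^ (α / p) := by
        gcongr
        exact min_le_right _ _
    _ ≤ t := by
      have hb : 0 < b := by positivity
      have hκ : κ ^ p = b ^ α / 2 := by rw [hκ_def, one_div, rpow_inv_rpow (by positivity) hp0.ne']
      rw [← rpow_le_rpow_iff (by positivity) (by linarith) hp0, mul_rpow (by positivity)
        (by positivity), ← rpow_mul hs, div_mul_cancel₀ _ hp0.ne', hκ]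
      rw [mul_rpow hb.le hs] at key
      linarith

lemma exists_pos_mul_one_add_log_rpow_le (hp : 1 < p) (hα : 0 < α) :
    ∃ c, 0 < c ∧ ∀ N I γ : ℝ, 0 ≤ I → 0 < N → N ≤ I ^ (1 / p) → I ^ (1 / p) ≤ γ →
      (∀ a, 0 ≤ a → log (exp 1 + (a / γ) ^ p) ^ α * (I - a ^ (p - 1) * N) ≤ γ ^ p) →
      c * I ^ (1 / p) * (1 + log (I ^ (1 / p) / N) ^ (α / p)) ≤ γ := by
  obtain ⟨κ, hκ, hgrowth⟩ := exists_pos_mul_log_rpow_le hp hα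
  refine ⟨min 1 κ / 2, by positivity, fun N I γ hI hN hNI hIγ h => ?_⟩
  set Np := I ^ (1 / p) with hNp_def
  have hNp : 0 < Np := hN.trans_le hNI
  have hγ : 0 < γ := hNp.trans_le hIγ
  have hINp : I = Np ^ p := by rw [hNp_def, one_div, rpow_inv_rpow hI (by linarith)]
  have hR : 1 ≤ Np / N := (one_le_div hN).2 hNI
  have ht : 1 ≤ γ / Np := (one_le_div hNp).2 hIγ
  -- `h` is homogeneous of degree `p` in `(N, Np, γ, a)`: normalize `Np` to `1`
  have key : κ * log (Np / N) ^ (α / p) ≤ γ / Np := by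
    refine hgrowth _ _ hR ht fun a ha => ?_
    have hscale : I - (a * Np) ^ (p - 1) * N = Np ^ p * (1 - a ^ (p - 1) / (Np / N)) := by
      rw [mul_rpow ha hNp.le, rpow_sub_one hNp.ne', hINp]
      field_simp
    have := h (a * Np) (by positivity)
    rw [hscale, ← div_div_eq_mul_div] at this
    rw [div_rpow (by positivity) hNp.le, le_div_iff₀ (by positivity)]
    linarith
  have hL : 0 ≤ log (Np / N) ^ (α / p) := rpow_nonneg (log_nonneg hR) _
  have h1 : min 1 κ ≤ γ / Np := (min_le_left _ _).trans ht
  have h2 : min 1 κ * log (Np / N) ^ (α / p) ≤ γ / Np :=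
    (mul_le_mul_of_nonneg_right (min_le_right _ _) hL).trans key
  calc min 1 κ / 2 * Np * (1 + log (Np / N) ^ (α / p))
      = Np * ((min 1 κ + min 1 κ * log (Np / N) ^ (α / p)) / 2) := by ring
    _ ≤ Np * (γ / Np) := mul_le_mul_of_nonneg_left (by linarith) hNp.le
    _ = γ := mul_div_cancel₀ _ hNp.ne'

end Scalar

/-- **The lower bound on the `L_p(log L)^α` Orlicz norm (cf. [CE22, Lemma 17])**:
`‖f‖_{L_p(log L)^α(E)} ≥ c_{p,α} ‖f‖_{L_p(E)} (1 + log^{α/p}(‖f‖_{L_p(E)}/‖f‖_{L_1(E)}))`. -/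
theorem stmt18 (p α : ℝ) (hp : 1 ≤ p) (hα : 0 < α) :
    ∃ c : ℝ, 0 < c ∧
      ∀ (Ω : Type u) (mΩ : MeasurableSpace Ω) (μ : Measure Ω), IsProbabilityMeasure μ →
      ∀ (E : Type v) [NormedAddCommGroup E], ∀ f : Ω → E,
        StronglyMeasurable f → (∃ M, ∀ x, ‖f x‖ ≤ M) → ¬ (f =ᵐ[μ] 0) →
        c * (∫ x, ‖f x‖ ^ p ∂μ) ^ (1 / p) *
            (1 + Real.log ((∫ x, ‖f x‖ ^ p ∂μ) ^ (1 / p) / ∫ x, ‖f x‖ ∂μ) ^ (α / p)) ≤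
          orliczMeas μ p α f := by
  have hp0 : 0 < p := by linarith
  rcases hp.eq_or_lt with rfl | hp1
  · refine ⟨1, one_pos, fun Ω _ μ _ E _ f hf ⟨M, hM⟩ hf0 => ?_⟩
    have hf1 : Integrable f μ := .of_bound hf.aestronglyMeasurable M (ae_of_all _ hM)
    simp only [rpow_one, div_one, div_self (integral_norm_pos hf1 hf0).ne', log_one,
      zero_rpow hα.ne', add_zero, one_mul, mul_one]
    refine le_orliczMeas one_pos hα.le hM fun γ hγ hψ => ?_
    simpa using integral_norm_rpow_rpow_one_div_le one_pos hα.le hγ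
      (integrable_psi_norm_div_of_bound one_pos.le hα.le hf hM hγ) hψ
  obtain ⟨c, hc, hscalar⟩ := exists_pos_mul_one_add_log_rpow_le hp1 hα
  refine ⟨c, hc, fun Ω _ μ _ E _ f hf ⟨M, hM⟩ hf0 => ?_⟩
  have hf1 : Integrable f μ := .of_bound hf.aestronglyMeasurable M (ae_of_all _ hM)
  have hfp := integrable_norm_rpow_of_bound (μ := μ) hp0.le hf hM
  refine le_orliczMeas hp0 hα.le hM fun γ hγ hψ => ?_
  have hψi := integrable_psi_norm_div_of_bound (μ := μ) hp0.le hα.le hf hM hγ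
  exact hscalar _ _ _ (integral_nonneg fun x => by positivity) (integral_norm_pos hf1 hf0)
    (integral_le_integral_rpow_rpow_one_div (fun x => norm_nonneg (f x)) hp hf1.norm hfp)
    (integral_norm_rpow_rpow_one_div_le hp0 hα.le hγ hψi hψ)
    fun a ha => log_rpow_mul_sub_le_of_integral_psi_le_one hp hα.le hf hf1.norm hfp ha hγ hψi hψ
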